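/- arXiv:2301.04380 — 6 statements merged into one kernel-verified Lean document; each statement's English description precedes it below -/
import Mathlib

section
/- Suppose X_0 ≠ X and φ^n(X \ X_n) = X \ X_0 for every n ≥ 0. Then φ(X \ X_1) = X \ X_0 and φ(X_{n+1} \ X_{n+2}) = X_n \ X_{n+1} for every n ≥ 0. (This is the implication (2) ⇒ (3) of the paper's Theorem 2 on ideals with left approximate unit, stated at the level of the associated sequences of closed sets.) -/
/-- If `X₀ ≠ X` and `φ^n(X \ Xₙ) = X \ X₀` for every `n ≥ 0`, then
`φ(X \ X₁) = X \ X₀` and `φ(X_{n+1} \ X_{n+2}) = Xₙ \ X_{n+1}` for every `n ≥ 0`.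
(Implication (2) ⇒ (3) of Theorem 2.) -/
theorem stmt_0 {X : Type*} [TopologicalSpace X] [LocallyCompactSpace X] [T2Space X]
    (φ : X → X) (hcont : Continuous φ)
    (hproper : ∀ K : Set X, IsCompact K → IsCompact (φ ⁻¹' K))
    (hsurj : Function.Surjective φ)
    (Xs : ℕ → Set X) (hclosed : ∀ n, IsClosed (Xs n))
    (hstar : ∀ n, Xs (n + 1) ∪ φ '' Xs (n + 1) ⊆ Xs n)
    (hne : Xs 0 ≠ Set.univ)
    (h : ∀ n, φ^[n] '' (Set.univ \ Xs n) = Set.univ \ Xs 0) :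
    φ '' (Set.univ \ Xs 1) = Set.univ \ Xs 0 ∧
      ∀ n, φ '' (Xs (n + 1) \ Xs (n + 2)) = Xs n \ Xs (n + 1) := by
  have key : ∀ k, ∀ z, z ∈ Xs k → φ^[k] z ∈ Xs 0 := by
    intro k
    induction k with
    | zero => intro z hz; simpa using hz
    | succ k ih =>
      intro z hz
      have h1 : φ z ∈ Xs k := hstar k (Or.inr ⟨z, hz, rfl⟩)
      have := ih (φ z) h1
      simpa [Function.iterate_succ_apply] using this
  have hnot : ∀ k, ∀ z, z ∉ Xs k → φ^[k] z ∉ Xs 0 := by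
    intro k z hz
    have : φ^[k] z ∈ Set.univ \ Xs 0 := by
      rw [← h k]; exact ⟨z, ⟨trivial, hz⟩, rfl⟩
    exact this.2
  constructor
  · simpa using h 1
  · intro n
    ext y
    constructor
    · rintro ⟨x, ⟨hx1, hx2⟩, rfl⟩
      refine ⟨hstar n (Or.inr ⟨x, hx1, rfl⟩), fun hy => ?_⟩
      have h1 : φ^[n+1] (φ x) ∈ Xs 0 := key (n+1) (φ x) hy
      have h2 : φ^[n+2] x ∉ Xs 0 := hnot (n+2) x hx2
      exact h2 (by simpa [Function.iterate_succ_apply] using h1)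
    · rintro ⟨hy1, hy2⟩
      obtain ⟨x, rfl⟩ := hsurj y
      have hx1 : x ∈ Xs (n+1) := by
        by_contra hx
        have h1 : φ^[n+1] x ∉ Xs 0 := hnot (n+1) x hx
        have h2 : φ^[n] (φ x) ∈ Xs 0 := key n (φ x) hy1
        exact h1 (by simpa [Function.iterate_succ_apply] using h2)
      have hx2 : x ∉ Xs (n+2) := fun hx =>
        hy2 (hstar (n+1) (Or.inr ⟨x, hx, rfl⟩))
      exact ⟨x, ⟨hx1, hx2⟩, rfl⟩
end

section
/- Suppose φ(X \ X_1) = X \ X_0 and φ(X_{n+1} \ X_{n+2}) = X_n \ X_{n+1} for every n ≥ 0. Then φ^n(X \ X_n) = X \ X_0 for every n ≥ 0. (This is the implication (3) ⇒ (2) of the paper's Theorem 2 on ideals with left approximate unit, stated at the level of the associated sequences of closed sets.) -/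
/-- If `φ(X \ X₁) = X \ X₀` and `φ(X_{n+1} \ X_{n+2}) = Xₙ \ X_{n+1}`
for every `n ≥ 0`, then `φ^n(X \ Xₙ) = X \ X₀` for every `n ≥ 0`.
(Implication (3) ⇒ (2) of Theorem 2.) -/
theorem stmt_1 {X : Type*} [TopologicalSpace X] [LocallyCompactSpace X] [T2Space X]
    (φ : X → X) (hcont : Continuous φ)
    (hproper : ∀ K : Set X, IsCompact K → IsCompact (φ ⁻¹' K))
    (hsurj : Function.Surjective φ)
    (Xs : ℕ → Set X) (hclosed : ∀ n, IsClosed (Xs n))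
    (hstar : ∀ n, Xs (n + 1) ∪ φ '' Xs (n + 1) ⊆ Xs n)
    (h1 : φ '' (Set.univ \ Xs 1) = Set.univ \ Xs 0)
    (h2 : ∀ n, φ '' (Xs (n + 1) \ Xs (n + 2)) = Xs n \ Xs (n + 1)) :
    ∀ n, φ^[n] '' (Set.univ \ Xs n) = Set.univ \ Xs 0 := by
  have hsub : ∀ n, Xs (n+1) ⊆ Xs n := fun n x hx => hstar n (Or.inl hx)
  have key : ∀ n, φ '' (Set.univ \ Xs (n+1)) = Set.univ \ Xs n := by
    intro n
    induction n with
    | zero => exact h1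
    | succ n ih =>
      have hd : Set.univ \ Xs (n+2) = (Set.univ \ Xs (n+1)) ∪ (Xs (n+1) \ Xs (n+2)) := by
        ext x
        simp only [Set.mem_diff, Set.mem_univ, true_and, Set.mem_union]
        constructor
        · intro h
          by_cases hx : x ∈ Xs (n+1)
          · exact Or.inr ⟨hx, h⟩
          · exact Or.inl hx
        · rintro (h | ⟨_, h⟩)
          · exact fun hx => h (hsub (n+1) hx)
          · exact h
      rw [hd, Set.image_union, ih, h2 n]
      ext x
      simp only [Set.mem_union, Set.mem_diff, Set.mem_univ, true_and]
      constructor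
      · rintro (h | ⟨_, h⟩)
        · exact fun hx => h (hsub n hx)
        · exact h
      · intro h
        by_cases hx : x ∈ Xs n
        · exact Or.inr ⟨hx, h⟩
        · exact Or.inl hx
  intro n
  induction n with
  | zero => simp
  | succ n ih =>
    rw [Function.iterate_succ, Set.image_comp, key n, ih]
end

section
/- Suppose X_0 ≠ X. Then the following two conditions are equivalent: (i) φ^n(X \ X_n) = X \ X_0 for every n ≥ 0; (ii) φ(X \ X_1) = X \ X_0 and φ(X_{n+1} \ X_{n+2}) = X_n \ X_{n+1} for every n ≥ 0. (This is the equivalence (2) ⟺ (3) of the paper's Theorem 2 characterizing the ideals of the semicrossed product C_0(X)×_φ ℤ_+ that possess a left approximate unit.) -/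
/-- If `X₀ ≠ X`, then `φ^n(X \ Xₙ) = X \ X₀` for every `n ≥ 0` iff
`φ(X \ X₁) = X \ X₀` and `φ(X_{n+1} \ X_{n+2}) = Xₙ \ X_{n+1}` for every `n ≥ 0`.
(Equivalence (2) ⟺ (3) of Theorem 2.) -/
theorem stmt_2 {X : Type*} [TopologicalSpace X] [LocallyCompactSpace X] [T2Space X]
    (φ : X → X) (hcont : Continuous φ)
    (hproper : ∀ K : Set X, IsCompact K → IsCompact (φ ⁻¹' K))
    (hsurj : Function.Surjective φ)
    (Xs : ℕ → Set X) (hclosed : ∀ n, IsClosed (Xs n))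
    (hstar : ∀ n, Xs (n + 1) ∪ φ '' Xs (n + 1) ⊆ Xs n)
    (hne : Xs 0 ≠ Set.univ) :
    (∀ n, φ^[n] '' (Set.univ \ Xs n) = Set.univ \ Xs 0) ↔
      (φ '' (Set.univ \ Xs 1) = Set.univ \ Xs 0 ∧
        ∀ n, φ '' (Xs (n + 1) \ Xs (n + 2)) = Xs n \ Xs (n + 1)) := by
  -- basic consequences of (*)
  have hdec : ∀ n, Xs (n + 1) ⊆ Xs n := fun n x hx => hstar n (Or.inl hx)
  have hmono : ∀ m n, m ≤ n → Xs n ⊆ Xs m := by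
    intro m n hmn
    induction n with
    | zero => simp_all
    | succ k ih =>
      rcases Nat.lt_or_ge m (k + 1) with h | h
      · exact fun x hx => ih (Nat.lt_succ_iff.mp h) (hdec k hx)
      · have : m = k + 1 := le_antisymm hmn h
        subst this; exact fun x hx => hx
  have hφmem : ∀ n x, x ∈ Xs (n + 1) → φ x ∈ Xs n :=
    fun n x hx => hstar n (Or.inr ⟨x, hx, rfl⟩)
  have hiter : ∀ k n x, x ∈ Xs (n + k) → φ^[k] x ∈ Xs n := by
    intro k
    induction k with
    | zero => intro n x hx; simpa using hx
    | succ j ih =>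
      intro n x hx
      rw [Function.iterate_succ_apply]
      exact ih n (φ x) (hφmem (n + j) x hx)
  constructor
  · -- (i) → (ii)
    intro h
    refine ⟨by simpa using h 1, ?_⟩
    intro n
    apply Set.Subset.antisymm
    · rintro _ ⟨x, ⟨hx1, hx2⟩, rfl⟩
      refine ⟨hφmem n x hx1, ?_⟩
      intro hc
      have h1 : φ^[n + 1] (φ x) ∈ Xs 0 := hiter (n + 1) 0 (φ x) (by simpa using hc)
      have h2 : φ^[n + 2] x ∈ Set.univ \ Xs 0 := by
        rw [← h (n + 2)]
        exact ⟨x, ⟨trivial, hx2⟩, rfl⟩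
      rw [Function.iterate_succ_apply] at h2
      exact h2.2 h1
    · rintro y ⟨hy1, hy2⟩
      obtain ⟨x0, hx0⟩ := hsurj y
      by_cases hx : x0 ∈ Xs (n + 1)
      · refine ⟨x0, ⟨hx, ?_⟩, hx0⟩
        intro hc
        exact hy2 (hx0 ▸ hφmem (n + 1) x0 hc)
      · exfalso
        have h2 : φ^[n + 1] x0 ∈ Set.univ \ Xs 0 := by
          rw [← h (n + 1)]
          exact ⟨x0, ⟨trivial, hx⟩, rfl⟩
        have h1 : φ^[n] y ∈ Xs 0 := hiter n 0 y (by simpa using hy1)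
        rw [Function.iterate_succ_apply, hx0] at h2
        exact h2.2 h1
  · -- (ii) → (i)
    rintro ⟨h1, h2⟩
    have hφc : ∀ x, x ∉ Xs 1 → φ x ∉ Xs 0 := by
      intro x hx
      have : φ x ∈ Set.univ \ Xs 0 := by
        rw [← h1]; exact ⟨x, ⟨trivial, hx⟩, rfl⟩
      exact this.2
    have claimA : ∀ k n x, x ∈ Xs (n + k) → x ∉ Xs (n + k + 1) →
        φ^[k] x ∈ Xs n \ Xs (n + 1) := by
      intro k
      induction k with
      | zero => intro n x hx hx'; exact ⟨by simpa using hx, by simpa using hx'⟩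
      | succ j ih =>
        intro n x hx hx'
        have hφx : φ x ∈ Xs (n + j) \ Xs (n + j + 1) := by
          rw [← h2 (n + j)]
          exact ⟨x, ⟨hx, fun hc => hx' hc⟩, rfl⟩
        rw [Function.iterate_succ_apply]
        exact ih n (φ x) hφx.1 hφx.2
    have hfind : ∀ n z, z ∈ Xs 0 → z ∉ Xs n →
        ∃ m, m + 1 ≤ n ∧ z ∈ Xs m ∧ z ∉ Xs (m + 1) := by
      intro n
      induction n with
      | zero => intro z hz hz'; exact absurd hz hz'
      | succ k ih =>
        intro z hz hz'
        by_cases hk : z ∈ Xs k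
        · exact ⟨k, le_refl _, hk, hz'⟩
        · obtain ⟨m, hm, h3, h4⟩ := ih z hz hk
          exact ⟨m, Nat.le_succ_of_le hm, h3, h4⟩
    intro n
    induction n with
    | zero => simp
    | succ n ih =>
      apply Set.Subset.antisymm
      · rintro _ ⟨x, ⟨-, hx⟩, rfl⟩
        refine ⟨trivial, ?_⟩
        by_cases hxn : x ∈ Xs n
        · have := claimA n 0 x (by simpa using hxn) (by simpa using hx)
          rw [Function.iterate_succ_apply']
          exact hφc _ this.2
        · have : φ^[n] x ∈ Set.univ \ Xs 0 := by
            rw [← ih]; exact ⟨x, ⟨trivial, hxn⟩, rfl⟩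
          rw [Function.iterate_succ_apply']
          exact hφc _ (fun hc => this.2 (hmono 0 1 (by omega) hc))
      · rintro y ⟨-, hy⟩
        have : y ∈ φ^[n] '' (Set.univ \ Xs n) := by rw [ih]; exact ⟨trivial, hy⟩
        obtain ⟨z, ⟨-, hz⟩, hzy⟩ := this
        by_cases hz0 : z ∈ Xs 0
        · obtain ⟨m, hm, hzm, hzm'⟩ := hfind n z hz0 hz
          have : z ∈ φ '' (Xs (m + 1) \ Xs (m + 2)) := by
            rw [h2 m]; exact ⟨hzm, hzm'⟩
          obtain ⟨x, ⟨-, hx2⟩, hxz⟩ := this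
          refine ⟨x, ⟨trivial, fun hc => hx2 (hmono (m + 2) (n + 1) (by omega) hc)⟩, ?_⟩
          rw [Function.iterate_succ_apply, hxz, hzy]
        · have : z ∈ φ '' (Set.univ \ Xs 1) := by rw [h1]; exact ⟨trivial, hz0⟩
          obtain ⟨x, ⟨-, hx⟩, hxz⟩ := this
          refine ⟨x, ⟨trivial, fun hc => hx (hmono 1 (n + 1) (by omega) hc)⟩, ?_⟩
          rw [Function.iterate_succ_apply, hxz, hzy]
end

section
/- If φ^n(X \ X_n) ⊆ X \ X_0 for every n ≥ 0, then φ(X \ X_{n+2}) ⊆ X \ X_{n+1} for every n ≥ 0, and consequently φ(X_{n+1} \ X_{n+2}) ⊆ X_n \ X_{n+1} for every n ≥ 0. (An intermediate claim in the proof of implication (2) ⇒ (3) of the paper's Theorem 2.) -/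
lemma aux_iter {X : Type*} (φ : X → X) (Xs : ℕ → Set X)
    (hstar : ∀ n, Xs (n + 1) ∪ φ '' Xs (n + 1) ⊆ Xs n) :
    ∀ m y, y ∈ Xs m → φ^[m] y ∈ Xs 0 := by
  intro m
  induction m with
  | zero => intro y hy; simpa using hy
  | succ k ih =>
    intro y hy
    rw [Function.iterate_succ_apply]
    exact ih _ (hstar k (Or.inr ⟨y, hy, rfl⟩))

/-- If `φ^n(X \ Xₙ) ⊆ X \ X₀` for every `n ≥ 0`, then
`φ(X \ X_{n+2}) ⊆ X \ X_{n+1}` for every `n ≥ 0`, and consequently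
`φ(X_{n+1} \ X_{n+2}) ⊆ Xₙ \ X_{n+1}` for every `n ≥ 0`. -/
theorem stmt_5 {X : Type*} [TopologicalSpace X] [LocallyCompactSpace X] [T2Space X]
    (φ : X → X) (hcont : Continuous φ)
    (hproper : ∀ K : Set X, IsCompact K → IsCompact (φ ⁻¹' K))
    (hsurj : Function.Surjective φ)
    (Xs : ℕ → Set X) (hclosed : ∀ n, IsClosed (Xs n))
    (hstar : ∀ n, Xs (n + 1) ∪ φ '' Xs (n + 1) ⊆ Xs n)
    (h : ∀ n, φ^[n] '' (Set.univ \ Xs n) ⊆ Set.univ \ Xs 0) :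
    (∀ n, φ '' (Set.univ \ Xs (n + 2)) ⊆ Set.univ \ Xs (n + 1)) ∧
      (∀ n, φ '' (Xs (n + 1) \ Xs (n + 2)) ⊆ Xs n \ Xs (n + 1)) := by
  have key : ∀ n x, x ∉ Xs (n + 2) → φ x ∉ Xs (n + 1) := by
    intro n x hx hfx
    have h1 : φ^[n + 1] (φ x) ∈ Xs 0 := aux_iter φ Xs hstar (n + 1) _ hfx
    have h2 := h (n + 2) ⟨x, ⟨trivial, hx⟩, rfl⟩
    rw [Function.iterate_succ_apply] at h2
    exact h2.2 h1
  refine ⟨fun n => ?_, fun n => ?_⟩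
  · rintro _ ⟨x, ⟨-, hx⟩, rfl⟩
    exact ⟨trivial, key n x hx⟩
  · rintro _ ⟨x, ⟨hx1, hx2⟩, rfl⟩
    exact ⟨hstar n (Or.inr ⟨x, hx1, rfl⟩), key n x hx2⟩
end

section
/- Let φ : X → X be a homeomorphism and suppose X_0 ≠ X and φ^n(X \ X_n) = X \ X_0 for every n ≥ 0. Set S = ⋂_{n=0}^∞ X_n and W = X_0 \ X_1. Then: S is a closed proper subset of X with φ(S) = S; the sets φ^{-1}(W), φ^{-2}(W), … are pairwise disjoint; φ^k(W) ∩ S = ∅ for every integer k; and X_n = S ∪ (⋃_{k=n}^∞ φ^{-k}(W)) for every n ≥ 0. (This is the implication (1) ⇒ (2) of the paper's Proposition on ideals with left approximate unit when φ is a homeomorphism, stated at the level of the associated sequences of closed sets.) -/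
/-- Let `φ` be a homeomorphism, `X₀ ≠ X` and
`φ^n(X \ Xₙ) = X \ X₀` for every `n ≥ 0`. Set `S = ⋂ₙ Xₙ` and `W = X₀ \ X₁`. Then
`S` is a closed proper subset of `X` with `φ(S) = S`; the sets `φ⁻¹(W), φ⁻²(W), …`
are pairwise disjoint; `φ^k(W) ∩ S = ∅` for every integer `k`; and
`Xₙ = S ∪ ⋃_{k ≥ n} φ^{-k}(W)` for every `n ≥ 0`.
(Implication (1) ⇒ (2) of the Proposition.) -/
theorem stmt_9 {X : Type*} [TopologicalSpace X] [LocallyCompactSpace X] [T2Space X]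
    (φ : X ≃ₜ X)
    (Xs : ℕ → Set X) (hclosed : ∀ n, IsClosed (Xs n))
    (hstar : ∀ n, Xs (n + 1) ∪ ⇑φ '' Xs (n + 1) ⊆ Xs n)
    (hne : Xs 0 ≠ Set.univ)
    (h : ∀ n, (⇑φ)^[n] '' (Set.univ \ Xs n) = Set.univ \ Xs 0)
    (S W : Set X) (hSdef : S = ⋂ n, Xs n) (hWdef : W = Xs 0 \ Xs 1) :
    IsClosed S ∧ S ≠ Set.univ ∧ ⇑φ '' S = S ∧
      (∀ i j : ℕ, i ≠ j →
        (⇑φ.symm)^[i + 1] '' W ∩ (⇑φ.symm)^[j + 1] '' W = ∅) ∧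
      (∀ k : ℤ, ⇑(φ.toEquiv ^ k) '' W ∩ S = ∅) ∧
      (∀ n, Xs n = S ∪ ⋃ k ∈ Set.Ici n, (⇑φ.symm)^[k] '' W) := by
  have hmono : ∀ n, Xs (n + 1) ⊆ Xs n := fun n =>
    Set.subset_union_left.trans (hstar n)
  have hanti : Antitone Xs := antitone_nat_of_succ_le hmono
  have hinj : ∀ n, Function.Injective ((⇑φ)^[n]) := fun n => φ.injective.iterate n
  have hsurj : ∀ n, Function.Surjective ((⇑φ)^[n]) := fun n => φ.surjective.iterate n
  -- the image fact: φ^[n] '' Xs n = Xs 0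
  have himg : ∀ n, (⇑φ)^[n] '' Xs n = Xs 0 := by
    intro n
    have h1 := h n
    rw [Set.image_diff (hinj n), Set.image_univ, (hsurj n).range_eq,
      ← Set.compl_eq_univ_diff, ← Set.compl_eq_univ_diff] at h1
    exact compl_injective h1
  have hli : ∀ n, Function.LeftInverse ((⇑φ.symm)^[n]) ((⇑φ)^[n]) :=
    fun n => Function.LeftInverse.iterate φ.symm_apply_apply n
  have hXn : ∀ n, Xs n = (⇑φ.symm)^[n] '' Xs 0 := by
    intro n
    rw [← himg n, ← Set.image_comp, Function.LeftInverse.comp_eq_id (hli n), Set.image_id]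
  have hstep : ∀ n, Xs (n + 1) = ⇑φ.symm '' Xs n := by
    intro n
    rw [hXn n, hXn (n + 1), ← Set.image_comp, ← Function.iterate_succ']
  have hphiXn : ∀ n, ⇑φ '' Xs (n + 1) = Xs n := by
    intro n
    rw [hstep n]
    ext x
    simp [Set.image_image]
  have hW : ∀ k, (⇑φ.symm)^[k] '' W = Xs k \ Xs (k + 1) := by
    intro k
    rw [hWdef, Set.image_diff (φ.symm.injective.iterate k), ← hXn k]
    congr 1
    rw [hstep 0, ← Set.image_comp, ← Function.iterate_succ, ← hXn (k + 1)]
  have hSsub : ∀ n, S ⊆ Xs n := fun n => hSdef ▸ Set.iInter_subset Xs n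
  -- closedness
  have hSclosed : IsClosed S := hSdef ▸ isClosed_iInter hclosed
  -- properness
  have hSne : S ≠ Set.univ := by
    intro heq
    exact hne (Set.eq_univ_of_univ_subset (heq ▸ hSsub 0))
  -- invariance
  have hSimg : ⇑φ '' S = S := by
    apply subset_antisymm
    · rw [hSdef]
      refine Set.subset_iInter fun n => ?_
      rw [← hphiXn n]
      exact Set.image_mono ((Set.iInter_subset Xs (n + 1)))
    · intro x hx
      refine ⟨φ.symm x, ?_, φ.apply_symm_apply x⟩
      rw [hSdef]
      refine Set.mem_iInter.2 fun n => ?_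
      have : φ.symm x ∈ Xs (n + 1) := by
        rw [hstep n]; exact ⟨x, hSsub n hx, rfl⟩
      exact hmono n this
  have hSsymm : ⇑φ.symm '' S = S := by
    conv_lhs => rw [← hSimg]
    ext x
    simp [Set.image_image]
  have hzpow : ∀ k : ℤ, ⇑(φ.toEquiv ^ k) '' S = S := by
    intro k
    induction k using Int.induction_on with
    | zero => simp
    | succ k ih =>
      rw [zpow_add_one, Equiv.Perm.coe_mul, Set.image_comp,
        show ⇑φ.toEquiv = ⇑φ from rfl, hSimg, ih]
    | pred k ih =>
      rw [zpow_sub_one, Equiv.Perm.coe_mul, Set.image_comp,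
        show ⇑(φ.toEquiv⁻¹) = ⇑φ.symm from rfl, hSsymm, ih]
  refine ⟨hSclosed, hSne, hSimg, ?_, ?_, ?_⟩
  · -- pairwise disjointness
    intro i j hij
    rw [hW, hW, Set.eq_empty_iff_forall_notMem]
    rintro x ⟨⟨hxi1, hxi2⟩, hxj1, hxj2⟩
    rcases hij.lt_or_gt with hlt | hlt
    · exact hxi2 (hanti (by omega : i + 1 + 1 ≤ j + 1) hxj1)
    · exact hxj2 (hanti (by omega : j + 1 + 1 ≤ i + 1) hxi1)
  · -- φ^k(W) ∩ S = ∅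
    intro k
    rw [Set.eq_empty_iff_forall_notMem]
    rintro x ⟨⟨y, hyW, rfl⟩, hxS⟩
    have : (φ.toEquiv ^ k) y ∈ ⇑(φ.toEquiv ^ k) '' S := (hzpow k).symm ▸ hxS
    obtain ⟨z, hzS, hz⟩ := this
    have hyz : z = y := (φ.toEquiv ^ k).injective hz
    rw [hWdef] at hyW
    exact hyW.2 (hSsub 1 (hyz ▸ hzS))
  · -- decomposition of Xs n
    intro n
    apply subset_antisymm
    · intro x hx
      by_cases hxS : x ∈ S
      · exact Or.inl hxS
      · have hex : ∃ m, x ∉ Xs m := by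
          by_contra hc
          push_neg at hc
          exact hxS (hSdef ▸ Set.mem_iInter.2 hc)
        classical
        let m := Nat.find hex
        have hm1 : x ∉ Xs m := Nat.find_spec hex
        have hm2 : ∀ l < m, x ∈ Xs l := fun l hl => by
          by_contra hc; exact absurd (Nat.find_le hc) (Nat.not_le.mpr hl)
        have hnm : n < m := by
          by_contra hc
          push_neg at hc
          exact hm1 (hanti hc hx)
        refine Or.inr (Set.mem_biUnion (show m - 1 ∈ Set.Ici n by
          simp [Set.mem_Ici]; omega) ?_)
        rw [hW]
        constructor
        · exact hm2 (m - 1) (by omega)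
        · have : m - 1 + 1 = m := by omega
          rw [this]; exact hm1
    · rintro x (hxS | hxU)
      · exact hSsub n hxS
      · simp only [Set.mem_iUnion, Set.mem_Ici] at hxU
        obtain ⟨k, hk, hxk⟩ := hxU
        rw [hW] at hxk
        exact hanti hk hxk.1
end

section
/- Let φ : X → X be a homeomorphism and suppose X_0 ≠ X. Then the following are equivalent: (i) φ^n(X \ X_n) = X \ X_0 for every n ≥ 0; (ii) there exist subsets S, W of X, each a proper subset of X, such that S is closed, φ(S) = S, the sets φ^{-1}(W), φ^{-2}(W), … are pairwise disjoint, φ^k(W) ∩ S = ∅ for every integer k, and X_n = S ∪ (⋃_{k=n}^∞ φ^{-k}(W)) for every n ≥ 0. (This is the paper's Proposition characterizing, when φ is a homeomorphism, the ideals of C_0(X)×_φ ℤ_+ with a left approximate unit, stated at the level of the associated sequences of closed sets.) -/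
section auxlemmas

variable {X : Type*}

lemma aux_iter_anti (g : X → X) {A : Set X} (h : g '' A ⊆ A) :
    ∀ {m n : ℕ}, m ≤ n → g^[n] '' A ⊆ g^[m] '' A := by
  have step : ∀ n : ℕ, g^[n+1] '' A ⊆ g^[n] '' A := by
    intro n
    rw [Function.iterate_succ, Set.image_comp]
    exact Set.image_mono h
  intro m n hmn
  induction hmn with
  | refl => exact le_refl _
  | step h ih => exact le_trans (step _) ih

lemma aux_symm_iter_image (e : X ≃ X) (n : ℕ) (B : Set X) :
    (⇑e.symm)^[n] '' B = (⇑e)^[n] ⁻¹' B := by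
  induction n with
  | zero => simp
  | succ n ih =>
    rw [Function.iterate_succ', Set.image_comp, ih]
    rw [show e.symm '' ((⇑e)^[n] ⁻¹' B) = ⇑e ⁻¹' ((⇑e)^[n] ⁻¹' B) from by
      rw [Equiv.image_eq_preimage_symm]; simp,
      ← Set.preimage_comp, ← Function.iterate_succ]

lemma aux_cond (e : X ≃ X) (A B : Set X) (n : ℕ) :
    (⇑e)^[n] '' (Set.univ \ B) = Set.univ \ A ↔ B = (⇑e.symm)^[n] '' A := by
  have hbij : Function.Bijective ((⇑e)^[n]) := e.bijective.iterate n
  rw [← Set.compl_eq_univ_diff, ← Set.compl_eq_univ_diff, Set.image_compl_eq hbij,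
    compl_inj_iff, aux_symm_iter_image]
  constructor
  · rintro rfl; exact (Set.preimage_image_eq B hbij.injective).symm
  · rintro rfl; exact Set.image_preimage_eq A hbij.surjective

lemma aux_reindex (g : X → X) (W : Set X) (n : ℕ) :
    ⋃ k ∈ Set.Ici n, g^[k] '' W = ⋃ k : ℕ, g^[k + n] '' W := by
  ext x
  simp only [Set.mem_iUnion, Set.mem_Ici, exists_prop]
  constructor
  · rintro ⟨k, hk, hx⟩; exact ⟨k - n, by rwa [Nat.sub_add_cancel hk]⟩
  · rintro ⟨k, hx⟩; exact ⟨k + n, Nat.le_add_left n k, hx⟩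

end auxlemmas

/-- Let `φ` be a homeomorphism and `X₀ ≠ X`. Then
`φ^n(X \ Xₙ) = X \ X₀` for every `n ≥ 0` iff there exist proper subsets
`S, W ⊊ X` with `S` closed, `φ(S) = S`, the sets `φ⁻¹(W), φ⁻²(W), …`
pairwise disjoint, `φ^k(W) ∩ S = ∅` for every integer `k`, and
`Xₙ = S ∪ ⋃_{k ≥ n} φ^{-k}(W)` for every `n ≥ 0`. (The Proposition.) -/
theorem stmt_10 {X : Type*} [TopologicalSpace X] [LocallyCompactSpace X] [T2Space X]
    (φ : X ≃ₜ X)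
    (Xs : ℕ → Set X) (hclosed : ∀ n, IsClosed (Xs n))
    (hstar : ∀ n, Xs (n + 1) ∪ ⇑φ '' Xs (n + 1) ⊆ Xs n)
    (hne : Xs 0 ≠ Set.univ) :
    (∀ n, (⇑φ)^[n] '' (Set.univ \ Xs n) = Set.univ \ Xs 0) ↔
      (∃ S W : Set X, S ≠ Set.univ ∧ W ≠ Set.univ ∧
        IsClosed S ∧ ⇑φ '' S = S ∧
        (∀ i j : ℕ, i ≠ j →
          (⇑φ.symm)^[i + 1] '' W ∩ (⇑φ.symm)^[j + 1] '' W = ∅) ∧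
        (∀ k : ℤ, ⇑(φ.toEquiv ^ k) '' W ∩ S = ∅) ∧
        (∀ n, Xs n = S ∪ ⋃ k ∈ Set.Ici n, (⇑φ.symm)^[k] '' W)) := by
  classical
  set g : X → X := ⇑φ.symm with hg
  have hcoe : ⇑φ.toEquiv = ⇑φ := rfl
  have hcoe' : ⇑φ.toEquiv.symm = g := rfl
  have key : ∀ n (B : Set X),
      ((⇑φ)^[n] '' (Set.univ \ B) = Set.univ \ Xs 0 ↔ B = g^[n] '' Xs 0) := by
    intro n B
    have := aux_cond φ.toEquiv (Xs 0) B n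
    rwa [hcoe, hcoe'] at this
  have hgf : g ∘ ⇑φ = id := φ.symm_comp_self
  have hfg : ⇑φ ∘ g = id := φ.self_comp_symm
  constructor
  · -- forward direction
    intro hcond
    have hX : ∀ n, Xs n = g^[n] '' Xs 0 := fun n => (key n (Xs n)).1 (hcond n)
    set A := Xs 0 with hA
    have hgA : g '' A ⊆ A := by
      have h1 : Xs 1 = g '' A := by simpa using hX 1
      intro x hx
      exact hstar 0 (Or.inl (h1 ▸ hx))
    have anti : ∀ {m n : ℕ}, m ≤ n → g^[n] '' A ⊆ g^[m] '' A := aux_iter_anti g hgA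
    set S : Set X := ⋂ n : ℕ, g^[n] '' A with hS
    set W : Set X := A \ g '' A with hW
    have hSsub : ∀ n, S ⊆ g^[n] '' A := fun n => Set.iInter_subset _ n
    have hSA : S ⊆ A := by simpa using hSsub 0
    have ginj : ∀ k : ℕ, Function.Injective (g^[k]) := fun k =>
      (φ.symm.injective).iterate k
    have hWdiff : ∀ k : ℕ, g^[k] '' W = g^[k] '' A \ g^[k+1] '' A := by
      intro k
      rw [hW, Set.image_diff (ginj k)]
      congr 1
      rw [← Set.image_comp, ← Function.iterate_succ]
    have hgS : g '' S = S := by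
      rw [hS, Set.image_iInter φ.symm.bijective]
      have heach : ∀ n : ℕ, g '' (g^[n] '' A) = g^[n+1] '' A := by
        intro n
        rw [← Set.image_comp, ← Function.iterate_succ']
      apply Set.Subset.antisymm
      · apply Set.subset_iInter
        intro n
        exact ((Set.iInter_subset _ n).trans (heach n).subset).trans (anti n.le_succ)
      · apply Set.subset_iInter
        intro n
        rw [heach n]
        exact hSsub (n+1)
    have hfS : ⇑φ '' S = S := by
      conv_lhs => rw [← hgS]
      rw [← Set.image_comp, hfg, Set.image_id]
    refine ⟨S, W, ?_, ?_, ?_, hfS, ?_, ?_, ?_⟩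
    · intro h
      exact hne (Set.univ_subset_iff.1 (h ▸ hSA))
    · intro h
      exact hne (Set.univ_subset_iff.1 (h ▸ (Set.diff_subset : W ⊆ A)))
    · apply isClosed_iInter
      intro n
      rw [show g^[n] '' A = (⇑φ)^[n] ⁻¹' A from aux_symm_iter_image φ.toEquiv n A]
      exact (hclosed 0).preimage (φ.continuous.iterate n)
    · -- pairwise disjoint
      have main : ∀ i j : ℕ, i < j → g^[i+1] '' W ∩ g^[j+1] '' W = ∅ := by
        intro i j hij
        apply Set.eq_empty_iff_forall_notMem.2
        rintro x ⟨hx1, hx2⟩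
        rw [hWdiff (i+1)] at hx1
        have hx2' : x ∈ g^[i+1+1] '' A := by
          have : g^[j+1] '' W ⊆ g^[j+1] '' A := Set.image_mono Set.diff_subset
          exact anti (by omega) (this hx2)
        exact hx1.2 hx2'
      intro i j hij
      rcases hij.lt_or_gt with h | h
      · exact main i j h
      · rw [Set.inter_comm]; exact main j i h
    · -- φ^k W ∩ S = ∅
      have hWS : W ∩ S = ∅ := by
        apply Set.eq_empty_iff_forall_notMem.2
        rintro x ⟨hx1, hx2⟩
        have : x ∈ g '' A := by simpa using hSsub 1 hx2
        exact hx1.2 this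
      have hzS : ∀ k : ℤ, ⇑(φ.toEquiv ^ k) '' S = S := by
        intro k
        induction k using Int.induction_on with
        | zero => simp
        | succ k ih =>
          rw [zpow_add_one, Equiv.Perm.coe_mul, Set.image_comp,
            show ⇑φ.toEquiv '' S = S from hfS, ih]
        | pred k ih =>
          rw [zpow_sub_one, Equiv.Perm.coe_mul, Set.image_comp,
            show ⇑(φ.toEquiv⁻¹) '' S = S from hgS, ih]
      intro k
      apply Set.eq_empty_iff_forall_notMem.2
      rintro x ⟨hx1, hx2⟩
      rw [← hzS k] at hx2
      obtain ⟨y, hyW, hy⟩ := hx1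
      obtain ⟨z, hzSmem, hz⟩ := hx2
      have : y = z := (φ.toEquiv ^ k).injective (hy.trans hz.symm)
      have : y ∈ W ∩ S := ⟨hyW, this ▸ hzSmem⟩
      rw [hWS] at this
      exact this
    · -- decomposition
      intro n
      rw [hX n]
      apply Set.Subset.antisymm
      · intro x hx
        by_cases hall : ∀ k, x ∈ g^[k] '' A
        · exact Or.inl (Set.mem_iInter.2 hall)
        · right
          push_neg at hall
          have hk := Nat.find_spec hall
          set k := Nat.find hall with hkdef
          have hnk : n < k := by
            by_contra hle
            exact hk (anti (by omega) hx)
          obtain ⟨m, hm⟩ : ∃ m, k = m + 1 := ⟨k - 1, by omega⟩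
          have hm1 : x ∈ g^[m] '' A := by
            by_contra hc
            have := Nat.find_min' hall hc
            omega
          have hxm : x ∈ g^[m] '' W := by
            rw [hWdiff m]
            exact ⟨hm1, hm ▸ hk⟩
          exact Set.mem_biUnion (show m ∈ Set.Ici n from by simp; omega) hxm
      · apply Set.union_subset
        · exact hSsub n
        · apply Set.iUnion₂_subset
          intro k hk
          exact (Set.image_mono Set.diff_subset).trans (anti hk)
  · -- backward direction
    rintro ⟨S, W, -, -, -, hfS, -, -, hXsn⟩
    intro n
    apply (key n (Xs n)).2
    have hgS : g '' S = S := by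
      conv_lhs => rw [← hfS]
      rw [← Set.image_comp, hgf, Set.image_id]
    have hgit : ∀ m : ℕ, g^[m] '' S = S := by
      intro m
      induction m with
      | zero => simp
      | succ m ih => rw [Function.iterate_succ', Set.image_comp, ih, hgS]
    rw [hXsn n, hXsn 0, Set.image_union, hgit n, aux_reindex g W 0,
      aux_reindex g W n, Set.image_iUnion]
    congr 1
    apply Set.iUnion_congr
    intro k
    rw [← Set.image_comp, ← Function.iterate_add,
      show n + (k + 0) = k + n from by omega]
end
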